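/- Each rule of the constraint resolution algorithm strictly decreases the degree of the constraint set in the lexicographic order on pairs (m, n), where m is the total number of constraints and n is the number of subtyping constraints; hence the rewrite relation induced by the rules is well-founded. -/

import Mathlib

/-! The constraint resolution algorithm of the paper (Figures 4 and 5):
constraint sets are finite sets of equality (`=_s`) and subtyping (`<:_s`)
constraints between types; the algorithm rewrites pairs (constraint set,
accumulated substitution) using rules (1)-(14). -/

inductive Ty (S F V : Type) where
  | tvar : V → Ty S F V
  | sort : S → Option F → Ty S F V
  | wt : Ty S F V
deriving DecidableEq

inductive Constr (S F V : Type) where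
  | eq : Ty S F V → Ty S F V → Constr S F V
  | sub : Ty S F V → Ty S F V → Constr S F V
deriving DecidableEq

variable {S F V : Type} [DecidableEq S] [DecidableEq F] [DecidableEq V]

/-- The singleton substitution `[α ↦ τ]`. -/
def sub1 (a : V) (τ : Ty S F V) : V → Ty S F V :=
  fun v => if v = a then τ else .tvar v

def applyTy (σ : V → Ty S F V) : Ty S F V → Ty S F V
  | .tvar a => σ a
  | .sort s g => .sort s g
  | .wt => .wt

def mapC (σ : V → Ty S F V) : Constr S F V → Constr S F V
  | .eq t1 t2 => .eq (applyTy σ t1) (applyTy σ t2)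
  | .sub t1 t2 => .sub (applyTy σ t1) (applyTy σ t2)

/-- Composition of substitutions. -/
def comp (σ1 σ2 : V → Ty S F V) : V → Ty S F V :=
  fun v => applyTy σ1 (σ2 v)

/-- `α` occurs in the constraint `c` (types are flat, so occurrence is being
one of the two sides). -/
def occursC (a : V) : Constr S F V → Prop
  | .eq t1 t2 => t1 = .tvar a ∨ t2 = .tvar a
  | .sub t1 t2 => t1 = .tvar a ∨ t2 = .tvar a

def Constr.isSub : Constr S F V → Bool
  | .sub _ _ => true
  | _ => false

/-- A state of the algorithm: the current constraint set and the accumulated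
substitution. -/
abbrev RState (S F V : Type) := Finset (Constr S F V) × (V → Ty S F V)

/-- One step of the constraint resolution algorithm (rules (1)-(14) of
Figure 5), parameterized by the decorated-sort subtyping relation `ds`
declared by the context `Γ` (its reflexive-transitive closure). -/
inductive Step (ds : Ty S F V → Ty S F V → Prop) :
    RState S F V → RState S F V → Prop where
  | r1 {τ C' σ} : Constr.eq τ τ ∉ C' →
      Step ds (insert (.eq τ τ) C', σ) (C', σ)
  | r2 {τ C' σ} : Constr.sub τ τ ∉ C' →
      Step ds (insert (.sub τ τ) C', σ) (C', σ)
  | r3 {s1 g1 s2 g2 C' σ} :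
      Constr.sub (.sort s1 g1) (.sort s2 g2) ∉ C' →
      ds (.sort s1 g1) (.sort s2 g2) →
      Step ds (insert (.sub (.sort s1 g1) (.sort s2 g2)) C', σ) (C', σ)
  | r4 {a τ C' σ} : Constr.eq (.tvar a) τ ∉ C' →
      Step ds (insert (.eq (.tvar a) τ) C', σ)
        (C'.image (mapC (sub1 a τ)), comp (sub1 a τ) σ)
  | r5 {a τ C' σ} : Constr.eq τ (.tvar a) ∉ C' →
      Step ds (insert (.eq τ (.tvar a)) C', σ)
        (C'.image (mapC (sub1 a τ)), comp (sub1 a τ) σ)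
  | r6 {s1 g1 s2 g2 s a C' σ} :
      Constr.sub (.sort s1 g1) (.tvar a) ≠ Constr.sub (.sort s2 g2) (.tvar a) →
      Constr.sub (.sort s1 g1) (.tvar a) ∉ C' →
      Constr.sub (.sort s2 g2) (.tvar a) ∉ C' →
      ds (.sort s1 g1) (.sort s none) → ds (.sort s2 g2) (.sort s none) →
      Step ds
        (insert (.sub (.sort s1 g1) (.tvar a))
          (insert (.sub (.sort s2 g2) (.tvar a)) C'), σ)
        (insert (.sub (.sort s none) (.tvar a)) C', σ)
  | r7a {s1 g1 s2 g2 a C' σ} :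
      Constr.sub (.tvar a) (.sort s1 g1) ≠ Constr.sub (.tvar a) (.sort s2 g2) →
      Constr.sub (.tvar a) (.sort s1 g1) ∉ C' →
      Constr.sub (.tvar a) (.sort s2 g2) ∉ C' →
      ds (.sort s1 g1) (.sort s2 g2) →
      Step ds
        (insert (.sub (.tvar a) (.sort s1 g1))
          (insert (.sub (.tvar a) (.sort s2 g2)) C'), σ)
        (insert (.sub (.tvar a) (.sort s1 g1)) C', σ)
  | r7b {s1 g1 s2 g2 a C' σ} :
      Constr.sub (.tvar a) (.sort s1 g1) ≠ Constr.sub (.tvar a) (.sort s2 g2) →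
      Constr.sub (.tvar a) (.sort s1 g1) ∉ C' →
      Constr.sub (.tvar a) (.sort s2 g2) ∉ C' →
      ds (.sort s2 g2) (.sort s1 g1) →
      Step ds
        (insert (.sub (.tvar a) (.sort s1 g1))
          (insert (.sub (.tvar a) (.sort s2 g2)) C'), σ)
        (insert (.sub (.tvar a) (.sort s2 g2)) C', σ)
  | r8 {τ1 τ2 C' σ} :
      Constr.sub τ1 τ2 ≠ Constr.sub τ2 τ1 →
      Constr.sub τ1 τ2 ∉ C' → Constr.sub τ2 τ1 ∉ C' →
      Step ds (insert (.sub τ1 τ2) (insert (.sub τ2 τ1) C'), σ)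
        (insert (.eq τ1 τ2) C', σ)
  | r9 {a1 a a2 C' σ} :
      Constr.sub (.tvar a1) (.tvar a) ≠ Constr.sub (.tvar a) (.tvar a2) →
      Constr.sub (.tvar a1) (.tvar a) ∉ C' →
      Constr.sub (.tvar a) (.tvar a2) ∉ C' →
      Step ds
        (insert (.sub (.tvar a1) (.tvar a))
          (insert (.sub (.tvar a) (.tvar a2)) C'), σ)
        (insert (.sub (.tvar a1) (.tvar a2))
          (C'.image (mapC (sub1 a (.tvar a2)))), comp (sub1 a (.tvar a2)) σ)
  | r10 {s g a a1 C' σ} :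
      Constr.sub (.sort s g) (.tvar a) ≠ Constr.sub (.tvar a) (.tvar a1) →
      Constr.sub (.sort s g) (.tvar a) ∉ C' →
      Constr.sub (.tvar a) (.tvar a1) ∉ C' →
      Step ds
        (insert (.sub (.sort s g) (.tvar a))
          (insert (.sub (.tvar a) (.tvar a1)) C'), σ)
        (insert (.sub (.sort s g) (.tvar a1))
          (C'.image (mapC (sub1 a (.tvar a1)))), comp (sub1 a (.tvar a1)) σ)
  | r11 {a1 a s g C' σ} :
      Constr.sub (.tvar a1) (.tvar a) ≠ Constr.sub (.tvar a) (.sort s g) →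
      Constr.sub (.tvar a1) (.tvar a) ∉ C' →
      Constr.sub (.tvar a) (.sort s g) ∉ C' →
      Step ds
        (insert (.sub (.tvar a1) (.tvar a))
          (insert (.sub (.tvar a) (.sort s g)) C'), σ)
        (insert (.sub (.tvar a1) (.sort s g))
          (C'.image (mapC (sub1 a (.tvar a1)))), comp (sub1 a (.tvar a1)) σ)
  | r12 {s1 g1 a s2 g2 C' σ} :
      Constr.sub (.sort s1 g1) (.tvar a) ≠ Constr.sub (.tvar a) (.sort s2 g2) →
      Constr.sub (.sort s1 g1) (.tvar a) ∉ C' →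
      Constr.sub (.tvar a) (.sort s2 g2) ∉ C' →
      ds (.sort s1 g1) (.sort s2 g2) →
      Step ds
        (insert (.sub (.sort s1 g1) (.tvar a))
          (insert (.sub (.tvar a) (.sort s2 g2)) C'), σ)
        (C'.image (mapC (sub1 a (.sort s2 g2))), comp (sub1 a (.sort s2 g2)) σ)
  | r13 {a τ C' σ} :
      Constr.sub (.tvar a) τ ∉ C' →
      (∀ c ∈ C', ¬ occursC a c) →
      Step ds (insert (.sub (.tvar a) τ) C', σ) (C', comp (sub1 a τ) σ)
  | r14 {a τ C' σ} :
      Constr.sub τ (.tvar a) ∉ C' →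
      (∀ c ∈ C', ¬ occursC a c) →
      Step ds (insert (.sub τ (.tvar a)) C', σ) (C', comp (sub1 a τ) σ)

/-- The degree of a state: the number of constraints in `C` together with
the number of subtyping constraints in `C`. -/
def degree (st : RState S F V) : ℕ × ℕ :=
  (st.1.card, (st.1.filter fun c => c.isSub = true).card)

/-!
Constraint sets are finite sets, so every rule already lowers the first component of the degree:
rules (1)-(5) and (12)-(14) delete one constraint and at most substitute in the rest, and a
substitution can only merge constraints, never create new ones; rules (6)-(11) replace two
distinct constraints by one constraint together with (an image of) the rest.
-/

theorem Finset.card_lt_card_insert_of_card_le {α : Type*} [DecidableEq α] {c : α}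
    {C D : Finset α} (hc : c ∉ C) (hD : D.card ≤ C.card) : D.card < (insert c C).card := by
  rw [Finset.card_insert_of_notMem hc]
  exact Nat.lt_succ_of_le hD

theorem Finset.card_lt_card_insert_insert_of_card_le {α : Type*} [DecidableEq α] {c₁ c₂ : α}
    {C D : Finset α} (hne : c₁ ≠ c₂) (hc₁ : c₁ ∉ C) (hc₂ : c₂ ∉ C) (hD : D.card ≤ C.card + 1) :
    D.card < (insert c₁ (insert c₂ C)).card := by
  refine Finset.card_lt_card_insert_of_card_le ?_ ?_
  · simp [hne, hc₁]
  · rwa [Finset.card_insert_of_notMem hc₂]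

theorem Finset.card_insert_image_le {α β : Type*} [DecidableEq β] (f : α → β) (b : β)
    (C : Finset α) : (insert b (C.image f)).card ≤ C.card + 1 :=
  (Finset.card_insert_le _ _).trans (Nat.add_le_add_right Finset.card_image_le 1)

/-- In rule (9) the type parameters of the side condition `hne` are not pinned down by the rule
and elaborate to fresh ones; this moves the condition back to `Ty S F V`. -/
theorem Constr.sub_tvar_ne_sub_tvar_of_ne {S₁ F₁ S₂ F₂ W : Type} {a₁ a a₂ : W}
    (h : (Constr.sub (.tvar a₁) (.tvar a) : Constr S₁ F₁ W) ≠ .sub (.tvar a) (.tvar a₂)) :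
    (Constr.sub (.tvar a₁) (.tvar a) : Constr S₂ F₂ W) ≠ .sub (.tvar a) (.tvar a₂) := by
  simpa using h

namespace Step

variable {ds : Ty S F V → Ty S F V → Prop} {st st' : RState S F V}

theorem card_lt (h : Step ds st st') : st'.1.card < st.1.card := by
  open Finset in
  cases h with
  | r1 h | r2 h | r3 h _ | r13 h _ | r14 h _ => exact card_lt_card_insert_of_card_le h le_rfl
  | r4 h | r5 h => exact card_lt_card_insert_of_card_le h card_image_le
  | r6 hne h₁ h₂ _ _ | r7a hne h₁ h₂ _ | r7b hne h₁ h₂ _ | r8 hne h₁ h₂ =>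
    exact card_lt_card_insert_insert_of_card_le hne h₁ h₂ (card_insert_le _ _)
  | r9 hne h₁ h₂ =>
    exact card_lt_card_insert_insert_of_card_le (Constr.sub_tvar_ne_sub_tvar_of_ne hne) h₁ h₂
      (card_insert_image_le _ _ _)
  | r10 hne h₁ h₂ | r11 hne h₁ h₂ =>
    exact card_lt_card_insert_insert_of_card_le hne h₁ h₂ (card_insert_image_le _ _ _)
  | r12 hne h₁ h₂ _ =>
    exact card_lt_card_insert_insert_of_card_le hne h₁ h₂ (Nat.le_succ_of_le card_image_le)

theorem degree_lt (h : Step ds st st') :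
    Prod.Lex (· < ·) (· < ·) (degree st') (degree st) :=
  Prod.Lex.left _ _ h.card_lt

end Step

/-- Each rule of the constraint resolution algorithm strictly decreases the
degree `(m, n)` of the constraint set (total number of constraints, number of
subtyping constraints) in the lexicographic order; hence the rewrite relation
induced by the rules is well-founded. -/
theorem step_decreases_degree (ds : Ty S F V → Ty S F V → Prop) :
    (∀ st st' : RState S F V, Step ds st st' →
      Prod.Lex (· < ·) (· < ·) (degree st') (degree st)) ∧
    WellFounded (fun st' st : RState S F V => Step ds st st') :=
  ⟨fun _ _ h => h.degree_lt,
    Subrelation.wf (fun h => Step.degree_lt h)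
      (InvImage.wf degree (wellFounded_lt.prod_lex wellFounded_lt))⟩
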